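/- arXiv:math/0410436 — 6 statements merged into one kernel-verified Lean document; each statement's English description precedes it below -/
import Mathlib

section
/- For complex numbers w, z and m distinct complex numbers z_1,...,z_m, the function H_m(w,z) = (∏_{k=1}^m (w - z_k) - ∏_{k=1}^m (z - z_k))/(w - z) (defined when w ≠ z) satisfies H_m(w,z) = ∑_{j=1}^m [∏_{k≠j} (w - z_k) · ∏_{k≠j} (z - z_k)] / ∏_{k≠j} (z_j - z_k). -/
open Finset

private lemma lagrange_sum_one (m : ℕ) (zs : Fin m → ℂ) (hzs : Function.Injective zs)
    (hm : 0 < m) (x : ℂ) :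
    ∑ j, (∏ k ∈ univ.erase j, (x - zs k)) / (∏ k ∈ univ.erase j, (zs j - zs k)) = 1 := by
  have : Nonempty (Fin m) := ⟨⟨0, hm⟩⟩
  have h := Lagrange.sum_basis (s := univ) (v := zs) hzs.injOn univ_nonempty
  have h2 := congrArg (Polynomial.eval x) h
  rw [Polynomial.eval_finset_sum, Polynomial.eval_one] at h2
  rw [← h2]
  refine Finset.sum_congr rfl fun j _ => ?_
  rw [Lagrange.basis, Polynomial.eval_prod]
  rw [div_eq_iff, ← Finset.prod_mul_distrib]
  · refine Finset.prod_congr rfl fun k hk => ?_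
    have hk' : zs j ≠ zs k := fun hE => (Finset.mem_erase.mp hk).1 (hzs hE).symm
    have h0 : zs j - zs k ≠ 0 := sub_ne_zero.mpr hk'
    simp only [Lagrange.basisDivisor, Polynomial.eval_mul, Polynomial.eval_C,
      Polynomial.eval_sub, Polynomial.eval_X]
    field_simp
  · exact Finset.prod_ne_zero_iff.mpr fun k hk =>
      sub_ne_zero.mpr fun hE => (Finset.mem_erase.mp hk).1 (hzs hE).symm

/-- For `w ≠ z` and pairwise distinct `z_1,...,z_m`,
`H_m(w,z) = (∏ (w - z_k) - ∏ (z - z_k))/(w - z)` equals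
`∑_j ∏_{k≠j}(w - z_k) ∏_{k≠j}(z - z_k) / ∏_{k≠j}(z_j - z_k)`. -/
theorem multi_point_H_formula (m : ℕ) (zs : Fin m → ℂ) (hzs : Function.Injective zs)
    (w z : ℂ) (hwz : w ≠ z) :
    ((∏ k, (w - zs k)) - ∏ k, (z - zs k)) / (w - z) =
      ∑ j, (∏ k ∈ univ.erase j, (w - zs k)) * (∏ k ∈ univ.erase j, (z - zs k)) /
        ∏ k ∈ univ.erase j, (zs j - zs k) := by
  rcases Nat.eq_zero_or_pos m with hm | hm
  · subst hm
    simp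
  rw [div_eq_iff (sub_ne_zero.mpr hwz)]
  have key : ∀ j : Fin m,
      (∏ k ∈ univ.erase j, (w - zs k)) * (∏ k ∈ univ.erase j, (z - zs k)) /
        (∏ k ∈ univ.erase j, (zs j - zs k)) * (w - z)
      = (∏ k, (w - zs k)) * ((∏ k ∈ univ.erase j, (z - zs k)) /
          (∏ k ∈ univ.erase j, (zs j - zs k)))
        - (∏ k, (z - zs k)) * ((∏ k ∈ univ.erase j, (w - zs k)) /
          (∏ k ∈ univ.erase j, (zs j - zs k))) := by
    intro j
    have hPw : (∏ k, (w - zs k)) = (w - zs j) * ∏ k ∈ univ.erase j, (w - zs k) :=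
      (Finset.mul_prod_erase univ _ (mem_univ j)).symm
    have hPz : (∏ k, (z - zs k)) = (z - zs j) * ∏ k ∈ univ.erase j, (z - zs k) :=
      (Finset.mul_prod_erase univ _ (mem_univ j)).symm
    have hd : (∏ k ∈ univ.erase j, (zs j - zs k)) ≠ 0 :=
      Finset.prod_ne_zero_iff.mpr fun k hk =>
        sub_ne_zero.mpr fun hE => (Finset.mem_erase.mp hk).1 (hzs hE).symm
    rw [hPw, hPz]
    field_simp
    ring
  rw [Finset.sum_mul]
  rw [Finset.sum_congr rfl fun j _ => key j, Finset.sum_sub_distrib,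
    ← Finset.mul_sum, ← Finset.mul_sum,
    lagrange_sum_one m zs hzs hm z, lagrange_sum_one m zs hzs hm w]
  ring
end

section
/- For any complex numbers z_1, z_2, ..., z_n with n > 1, the identity ∑_{j=1}^n [∏_{l=1}^{j-1} (z_n - z_l)] · [∏_{l=j+1}^n (z_1 - z_l)] = 0 holds. -/
open Finset

lemma prod_Icc_split_bot {M : Type*} [CommMonoid M] (g : ℕ → M) {j n : ℕ} (h : j ≤ n) :
    ∏ l ∈ Finset.Icc j n, g l = g j * ∏ l ∈ Finset.Icc (j + 1) n, g l := by
  rw [show Finset.Icc j n = Finset.Ico j (n + 1) by rw [Finset.Ico_add_one_right_eq_Icc],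
      show Finset.Icc (j+1) n = Finset.Ico (j+1) (n + 1) by rw [Finset.Ico_add_one_right_eq_Icc],
      Finset.prod_eq_prod_Ico_succ_bot (by omega) g]

/-- For arbitrary complex numbers `z_1,...,z_n`, `n ≥ 2`,
`∑_{j=1}^n [∏_{l=1}^{j-1} (z_n - z_l)] [∏_{l=j+1}^n (z_1 - z_l)] = 0`. -/
theorem telescoping_product_sum_eq_zero (n : ℕ) (hn : 2 ≤ n) (zs : ℕ → ℂ) :
    ∑ j ∈ Finset.Icc 1 n,
      (∏ l ∈ Finset.Icc 1 (j - 1), (zs n - zs l)) *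
        ∏ l ∈ Finset.Icc (j + 1) n, (zs 1 - zs l) = 0 := by
  by_cases hz : zs n = zs 1
  · apply Finset.sum_eq_zero
    intro j hj
    simp only [Finset.mem_Icc] at hj
    rcases eq_or_lt_of_le hj.2 with h | h
    · -- j = n : first product contains l = 1
      subst h
      exact mul_eq_zero_of_left
        (Finset.prod_eq_zero (show 1 ∈ Finset.Icc 1 (j - 1) by
          simp [Finset.mem_Icc]; omega) (by rw [hz, sub_self])) _
    · -- j < n : second product contains l = n
      exact mul_eq_zero_of_right _
        (Finset.prod_eq_zero (show n ∈ Finset.Icc (j + 1) n by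
          simp [Finset.mem_Icc]; omega) (sub_eq_zero.mpr hz.symm))
  · set f : ℕ → ℂ := fun i =>
      (∏ l ∈ Finset.Icc 1 i, (zs n - zs l)) * ∏ l ∈ Finset.Icc (i + 1) n, (zs 1 - zs l)
      with hf
    have key : ∀ j ∈ Finset.Icc 1 n,
        f j - f (j - 1) = (zs n - zs 1) *
          ((∏ l ∈ Finset.Icc 1 (j - 1), (zs n - zs l)) *
            ∏ l ∈ Finset.Icc (j + 1) n, (zs 1 - zs l)) := by
      intro j hj
      simp only [Finset.mem_Icc] at hj
      obtain ⟨h1, h2⟩ := hj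
      have e1 : ∏ l ∈ Finset.Icc 1 j, (zs n - zs l)
          = (∏ l ∈ Finset.Icc 1 (j - 1), (zs n - zs l)) * (zs n - zs j) := by
        rw [show j = (j - 1) + 1 by omega, Finset.prod_Icc_succ_top (by omega)]
        congr 2 <;> omega
      have e2 : ∏ l ∈ Finset.Icc ((j - 1) + 1) n, (zs 1 - zs l)
          = (zs 1 - zs j) * ∏ l ∈ Finset.Icc (j + 1) n, (zs 1 - zs l) := by
        rw [show (j - 1) + 1 = j by omega, prod_Icc_split_bot _ h2]
      rw [hf]; simp only
      rw [e1, e2]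
      ring
    have tele : ∑ j ∈ Finset.Icc 1 n, (f j - f (j - 1)) = f n - f 0 := by
      rw [show Finset.Icc 1 n = Finset.Ico 1 (n + 1) by rw [Finset.Ico_add_one_right_eq_Icc],
        Finset.sum_Ico_eq_sum_range]
      simp only [Nat.add_sub_cancel]
      have h' : ∀ i, f (1 + i) - f (1 + i - 1) = f (i + 1) - f i := by
        intro i; congr 1 <;> congr 1 <;> omega
      rw [Finset.sum_congr rfl fun i _ => h' i, Finset.sum_range_sub]
    have hfn : f n = 0 := by
      show (∏ l ∈ Finset.Icc 1 n, (zs n - zs l)) * ∏ l ∈ Finset.Icc (n + 1) n, (zs 1 - zs l) = 0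
      exact mul_eq_zero_of_left
        (Finset.prod_eq_zero (show n ∈ Finset.Icc 1 n by simp [Finset.mem_Icc]; omega)
          (show zs n - zs n = 0 from sub_self _)) _
    have hf0 : f 0 = 0 := by
      show (∏ l ∈ Finset.Icc 1 0, (zs n - zs l)) * ∏ l ∈ Finset.Icc (0 + 1) n, (zs 1 - zs l) = 0
      exact mul_eq_zero_of_right _
        (Finset.prod_eq_zero (show 1 ∈ Finset.Icc (0 + 1) n by simp [Finset.mem_Icc]; omega)
          (show zs 1 - zs 1 = 0 from sub_self _))
    have hmain : (zs n - zs 1) * ∑ j ∈ Finset.Icc 1 n,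
        (∏ l ∈ Finset.Icc 1 (j - 1), (zs n - zs l)) *
          ∏ l ∈ Finset.Icc (j + 1) n, (zs 1 - zs l) = 0 := by
      rw [Finset.mul_sum, ← Finset.sum_congr rfl key, tele, hfn, hf0, sub_zero]
    exact (mul_eq_zero.mp hmain).resolve_left (sub_ne_zero_of_ne hz)
end

section
/- Let z_1,...,z_m be pairwise distinct complex numbers. Then for all complex w, z: ∑_{j=1}^m [∏_{k≠j} (z - z_k) · ∏_{k≠j} (w - z_k)] / ∏_{k≠j} (z_j - z_k) = ∑_{j=1}^m [∏_{k=1}^{j-1} (z - z_k)] · [∏_{k=j+1}^m (w - z_k)]. -/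
open Finset Polynomial Lagrange

/-! As a polynomial in `z`, the right-hand side `Q(z) = ∑_j ∏_{k<j} (z - z_k) ∏_{k>j} (w - z_k)` has
degree `< m`, while the left-hand side is the Lagrange interpolant of the values
`∏_{k ≠ i} (w - z_k)` at the nodes `z_i`. So it suffices that `Q(z_i) = ∏_{k ≠ i} (w - z_k)`, which
comes from the telescoping identity `(z - w) Q(z) = ∏_k (z - z_k) - ∏_k (w - z_k)`. -/

section OrderedProducts

variable {ι R : Type*} [LinearOrder ι] [CommRing R]

theorem Finset.sub_mul_sum_prod_lt_mul_prod_gt (s : Finset ι) (a : ι → R) (x y : R) :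
    (y - x) * ∑ j ∈ s, (∏ k ∈ s with k < j, (y - a k)) * ∏ k ∈ s with j < k, (x - a k) =
      ∏ k ∈ s, (y - a k) - ∏ k ∈ s, (x - a k) := by
  have h := prod_add_ordered s (fun k => x - a k) (fun _ => y - x)
  simp only [sub_add_sub_cancel', mul_assoc] at h
  rw [h, mul_sum]
  ring

/- At `y = a i` the previous identity reads `(a i - x) * Q = -(x - a i) * ∏_{k ≠ i} (x - a k)`;
the factor `x - a i` can be cancelled once `x` is a polynomial variable. -/
theorem Finset.sum_prod_lt_mul_prod_gt_at_node (s : Finset ι) (a : ι → R) (x : R) {i : ι}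
    (hi : i ∈ s) :
    ∑ j ∈ s, (∏ k ∈ s with k < j, (a i - a k)) * ∏ k ∈ s with j < k, (x - a k) =
      ∏ k ∈ s.erase i, (x - a k) := by
  have hpoly := s.sub_mul_sum_prod_lt_mul_prod_gt (C ∘ a) X (C (a i))
  rw [prod_eq_zero hi (sub_self _), ← mul_prod_erase s _ hi, zero_sub, ← neg_sub,
    neg_mul, neg_inj] at hpoly
  have := congrArg (eval x) ((monic_X_sub_C (a i)).isRegular.left hpoly)
  simpa [eval_finsetSum, eval_prod] using this

theorem Lagrange.degree_sum_nodal_filter_lt_mul_C_lt [Nontrivial R] (s : Finset ι) (v c : ι → R) :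
    (∑ j ∈ s, nodal {k ∈ s | k < j} v * C (c j)).degree < #s := by
  refine (degree_sum_le _ _).trans_lt <|
    (Finset.sup_lt_iff (WithBot.bot_lt_coe _)).2 fun j hj => ?_
  have hcard : #{k ∈ s | k < j} < #s := card_lt_card (filter_ssubset.2 ⟨j, hj, lt_irrefl j⟩)
  calc (nodal {k ∈ s | k < j} v * C (c j)).degree
      ≤ (nodal {k ∈ s | k < j} v).degree + (C (c j)).degree := degree_mul_le _ _
    _ ≤ #{k ∈ s | k < j} + 0 := by rw [degree_nodal]; gcongr; exact degree_C_le
    _ < #s := by rw [add_zero]; exact_mod_cast hcard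

end OrderedProducts

theorem Lagrange.eval_interpolate {ι F : Type*} [DecidableEq ι] [Field F]
    (s : Finset ι) (v r : ι → F) (x : F) :
    (interpolate s v r).eval x =
      ∑ i ∈ s, (∏ j ∈ s.erase i, (x - v j)) * r i / ∏ j ∈ s.erase i, (v i - v j) := by
  simp only [interpolate_apply, eval_finsetSum, eval_mul, eval_C, Lagrange.basis, basisDivisor,
    eval_prod, eval_X, eval_sub, mul_comm _ (x - _), ← div_eq_mul_inv, prod_div_distrib]
  refine sum_congr rfl fun i _ => ?_
  ring

/-- For pairwise distinct `z_1,...,z_m` and all `w, z`: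
`∑_j ∏_{k≠j}(z - z_k) ∏_{k≠j}(w - z_k) / ∏_{k≠j}(z_j - z_k)
  = ∑_j [∏_{k=1}^{j-1}(z - z_k)][∏_{k=j+1}^m (w - z_k)]`. -/
theorem P_eq_Q (m : ℕ) (zs : ℕ → ℂ)
    (hzs : Set.InjOn zs (Finset.Icc 1 m : Set ℕ)) (w z : ℂ) :
    ∑ j ∈ Finset.Icc 1 m,
      (∏ k ∈ (Finset.Icc 1 m).erase j, (z - zs k)) *
        (∏ k ∈ (Finset.Icc 1 m).erase j, (w - zs k)) /
        ∏ k ∈ (Finset.Icc 1 m).erase j, (zs j - zs k) =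
    ∑ j ∈ Finset.Icc 1 m,
      (∏ k ∈ Finset.Icc 1 (j - 1), (z - zs k)) *
        ∏ k ∈ Finset.Icc (j + 1) m, (w - zs k) := by
  set S := Finset.Icc 1 m
  have hlt : ∀ j ∈ S, {k ∈ S | k < j} = Icc 1 (j - 1) := fun j hj => by
    ext k; simp [S] at hj ⊢; omega
  have hgt : ∀ j, {k ∈ S | j < k} = Icc (j + 1) m := fun j => by
    ext k; simp [S]; omega
  set Q : ℂ[X] := ∑ j ∈ S, nodal {k ∈ S | k < j} zs * C (∏ k ∈ S with j < k, (w - zs k))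
  have hQ : Q = interpolate S zs fun i => ∏ k ∈ S.erase i, (w - zs k) :=
    eq_interpolate_of_eval_eq _ hzs (degree_sum_nodal_filter_lt_mul_C_lt _ _ _) fun i hi => by
      simp only [Q, eval_finsetSum, eval_mul, eval_nodal, eval_C]
      exact S.sum_prod_lt_mul_prod_gt_at_node zs w hi
  rw [← eval_interpolate, ← hQ]
  simp only [Q, eval_finsetSum, eval_mul, eval_nodal, eval_C]
  exact sum_congr rfl fun j hj => by rw [hlt j hj, hgt]
end

section
/- As z_1, z_2, ..., z_{m-1} all tend to z_m (with w ≠ z_j for all j along the limit), the sum ∑_{j=1}^m [∏_{k≠j} (z - z_k)] / [(w - z_j) · ∏_{k≠j} (z_j - z_k)] converges to ∑_{j=0}^{m-1} (z - z_m)^j / (w - z_m)^{j+1}. -/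
open Finset Topology Filter

private lemma telescope_prod (a b : ℕ → ℂ) : ∀ n : ℕ,
    (∏ i ∈ range n, a i) - ∏ i ∈ range n, b i
      = ∑ j ∈ range n, (∏ i ∈ range j, b i) * (a j - b j) * ∏ i ∈ Ico (j+1) n, a i := by
  intro n
  induction n with
  | zero => simp
  | succ n ih =>
    rw [prod_range_succ, prod_range_succ, sum_range_succ]
    have hc : ∀ j ∈ range n,
        (∏ i ∈ range j, b i) * (a j - b j) * ∏ i ∈ Ico (j+1) (n+1), a i
          = ((∏ i ∈ range j, b i) * (a j - b j) * ∏ i ∈ Ico (j+1) n, a i) * a n := by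
      intro j hj
      rw [Finset.prod_Ico_succ_top (by simpa using Nat.succ_le_of_lt (mem_range.mp hj))]
      ring
    rw [sum_congr rfl hc, ← sum_mul, ← ih, Ico_self, prod_empty]
    ring

private lemma sum_ratio_eq_one {m : ℕ} (hm : 1 ≤ m) (v : Fin m → ℂ)
    (hv : Function.Injective v) (x : ℂ) :
    ∑ j, (∏ k ∈ univ.erase j, (x - v k)) / (∏ k ∈ univ.erase j, (v j - v k)) = 1 := by
  have : Nonempty (Fin m) := ⟨⟨0, hm⟩⟩
  have h := congrArg (Polynomial.eval x) (Lagrange.sum_basis (s := univ) hv.injOn univ_nonempty)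
  rw [Polynomial.eval_finset_sum, Polynomial.eval_one] at h
  rw [← h]
  refine sum_congr rfl fun j _ => ?_
  rw [Lagrange.basis, Polynomial.eval_prod]
  rw [div_eq_mul_inv, ← prod_inv_distrib, ← prod_mul_distrib]
  refine prod_congr rfl fun k _ => ?_
  simp [Lagrange.basisDivisor, mul_comm]

/-- As the points `z_1,...,z_{m-1}` tend to `z_m` (staying pairwise
distinct and distinct from `w`, with the last coordinate fixed at `z_m`), the sum
`∑_j ∏_{k≠j}(z - v_k) / [(w - v_j) ∏_{k≠j}(v_j - v_k)]` converges to
`∑_{j=0}^{m-1} (z - z_m)^j / (w - z_m)^{j+1}`. -/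
theorem coalescence_limit (m : ℕ) (hm : 1 ≤ m) (w z zm : ℂ) (hw : w ≠ zm) :
    Filter.Tendsto
      (fun v : Fin m → ℂ =>
        ∑ j, (∏ k ∈ univ.erase j, (z - v k)) /
          ((w - v j) * ∏ k ∈ univ.erase j, (v j - v k)))
      (nhdsWithin (fun _ => zm)
        {v : Fin m → ℂ | Function.Injective v ∧ (∀ j, w ≠ v j) ∧
          v ⟨m - 1, by omega⟩ = zm})
      (𝓝 (∑ j ∈ Finset.range m, (z - zm) ^ j / (w - zm) ^ (j + 1))) := by
  have hwzm : w - zm ≠ 0 := sub_ne_zero.mpr hw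
  -- extension of v to ℕ
  set V : (Fin m → ℂ) → ℕ → ℂ := fun v k => if h : k < m then v ⟨k, h⟩ else zm with hV
  -- the continuous surrogate function
  set g : (Fin m → ℂ) → ℂ := fun v =>
    (∑ j ∈ range m, (∏ i ∈ range j, (z - V v i)) * ∏ i ∈ Ico (j+1) m, (w - V v i)) /
      ∏ k, (w - v k) with hg
  have hVi : ∀ i : ℕ, Continuous fun v : Fin m → ℂ => V v i := by
    intro i
    by_cases h : i < m
    · simpa [hV, dif_pos h] using continuous_apply (⟨i, h⟩ : Fin m)
    · simpa [hV, dif_neg h] using continuous_const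
  -- g is continuous at the constant point
  have hVc : ∀ i : ℕ, V (fun _ => zm) i = zm := by
    intro i; by_cases h : i < m <;> simp [hV, h]
  have hgc : g (fun _ => zm) = ∑ j ∈ Finset.range m, (z - zm) ^ j / (w - zm) ^ (j + 1) := by
    rw [hg]
    simp only [hVc, prod_const, card_range, Nat.card_Ico, card_univ, Fintype.card_fin]
    rw [sum_div]
    refine sum_congr rfl fun j hj => ?_
    have hjm := mem_range.mp hj
    have hj' : (w - zm) ^ m = (w - zm) ^ (m - (j + 1)) * (w - zm) ^ (j + 1) := by
      rw [← pow_add]; congr 1; omega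
    rw [hj', mul_comm ((z - zm) ^ j), mul_div_mul_left _ _ (pow_ne_zero _ hwzm)]
  have hgt : Tendsto g (𝓝 (fun _ => zm))
      (𝓝 (∑ j ∈ Finset.range m, (z - zm) ^ j / (w - zm) ^ (j + 1))) := by
    rw [← hgc]
    have hnum : Continuous fun v : Fin m → ℂ =>
        ∑ j ∈ range m, (∏ i ∈ range j, (z - V v i)) * ∏ i ∈ Ico (j+1) m, (w - V v i) := by
      refine continuous_finset_sum _ fun j _ => Continuous.mul ?_ ?_ <;>
        exact continuous_finset_prod _ fun i _ => (continuous_const.sub (hVi i))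
    have hden : Continuous fun v : Fin m → ℂ => ∏ k, (w - v k) :=
      continuous_finset_prod _ fun k _ => continuous_const.sub (continuous_apply k)
    have hdc : (∏ k : Fin m, (w - (fun _ : Fin m => zm) k)) ≠ 0 := by
      simp [prod_const, pow_ne_zero, hwzm]
    exact (hnum.continuousAt.div hden.continuousAt hdc)
  refine Tendsto.congr' ?_ (hgt.mono_left nhdsWithin_le_nhds)
  -- eventual equality on the set
  filter_upwards [eventually_mem_nhdsWithin] with v hvS
  obtain ⟨hinj, hwv, -⟩ := hvS
  have hPw : (∏ k, (w - v k)) ≠ 0 :=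
    prod_ne_zero_iff.mpr fun k _ => sub_ne_zero.mpr (hwv k)
  have hD : ∀ j : Fin m, (∏ k ∈ univ.erase j, (v j - v k)) ≠ 0 := fun j =>
    prod_ne_zero_iff.mpr fun k hk => sub_ne_zero.mpr fun h => (mem_erase.mp hk).1 (hinj h.symm)
  -- the key identity, multiplied form, for every x
  have key : ∀ x : ℂ,
      (∑ j, (∏ k ∈ univ.erase j, (x - v k)) /
          ((w - v j) * ∏ k ∈ univ.erase j, (v j - v k))) * ((w - x) * ∏ k, (w - v k))
        = (∏ k, (w - v k)) - ∏ k, (x - v k) := by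
    intro x
    have step : ∀ j : Fin m,
        ((∏ k ∈ univ.erase j, (x - v k)) /
            ((w - v j) * ∏ k ∈ univ.erase j, (v j - v k))) * ((w - x) * ∏ k, (w - v k))
          = (∏ k, (w - v k)) *
              ((∏ k ∈ univ.erase j, (x - v k)) / (∏ k ∈ univ.erase j, (v j - v k)))
            - (∏ k, (x - v k)) *
              ((∏ k ∈ univ.erase j, (w - v k)) / (∏ k ∈ univ.erase j, (v j - v k))) := by
      intro j
      have hPxj : (∏ k, (x - v k)) = (x - v j) * ∏ k ∈ univ.erase j, (x - v k) :=
        (mul_prod_erase univ _ (mem_univ j)).symm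
      have hPwj : (∏ k, (w - v k)) = (w - v j) * ∏ k ∈ univ.erase j, (w - v k) :=
        (mul_prod_erase univ _ (mem_univ j)).symm
      rw [hPxj, hPwj]
      have hwj : w - v j ≠ 0 := sub_ne_zero.mpr (hwv j)
      have hDj := hD j
      field_simp
      ring
    rw [sum_mul, sum_congr rfl fun j _ => step j, sum_sub_distrib, ← mul_sum, ← mul_sum,
      sum_ratio_eq_one hm v hinj x, sum_ratio_eq_one hm v hinj w, mul_one, mul_one]
  -- the telescoped form of the right side
  have hVv : ∀ (x : ℂ), (∏ k, (x - v k)) = ∏ i ∈ range m, (x - V v i) := by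
    intro x
    rw [← Fin.prod_univ_eq_prod_range (fun i => x - V v i) m]
    refine prod_congr rfl fun i _ => ?_
    simp [hV, i.isLt]
  have tele : ∀ x : ℂ,
      (∏ k, (w - v k)) - (∏ k, (x - v k))
        = (w - x) * ∑ j ∈ range m, (∏ i ∈ range j, (x - V v i)) *
            ∏ i ∈ Ico (j+1) m, (w - V v i) := by
    intro x
    rw [hVv w, hVv x, telescope_prod (fun i => w - V v i) (fun i => x - V v i) m, mul_sum]
    exact sum_congr rfl fun j _ => by ring
  -- identity for x ≠ w, then extend to all x by continuity
  have heq : ∀ x : ℂ, x ≠ w →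
      (∑ j, (∏ k ∈ univ.erase j, (x - v k)) /
          ((w - v j) * ∏ k ∈ univ.erase j, (v j - v k)))
        = (∑ j ∈ range m, (∏ i ∈ range j, (x - V v i)) * ∏ i ∈ Ico (j+1) m, (w - V v i)) /
            ∏ k, (w - v k) := by
    intro x hx
    have hwx : w - x ≠ 0 := sub_ne_zero.mpr (Ne.symm hx)
    apply mul_right_cancel₀ (mul_ne_zero hwx hPw)
    rw [key x, tele x]
    field_simp
  -- continuity in x to cover x = w
  have hfun : (fun x : ℂ =>
      ∑ j, (∏ k ∈ univ.erase j, (x - v k)) /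
          ((w - v j) * ∏ k ∈ univ.erase j, (v j - v k)))
      = (fun x : ℂ =>
      (∑ j ∈ range m, (∏ i ∈ range j, (x - V v i)) * ∏ i ∈ Ico (j+1) m, (w - V v i)) /
            ∏ k, (w - v k)) := by
    have hc1 : Continuous fun x : ℂ =>
        ∑ j, (∏ k ∈ univ.erase j, (x - v k)) /
          ((w - v j) * ∏ k ∈ univ.erase j, (v j - v k)) := by
      refine continuous_finset_sum _ fun j _ => Continuous.div_const ?_ _
      exact continuous_finset_prod _ fun k _ => continuous_id.sub continuous_const
    have hc2 : Continuous fun x : ℂ =>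
        (∑ j ∈ range m, (∏ i ∈ range j, (x - V v i)) * ∏ i ∈ Ico (j+1) m, (w - V v i)) /
            ∏ k, (w - v k) := by
      refine Continuous.div_const ?_ _
      refine continuous_finset_sum _ fun j _ => Continuous.mul ?_ continuous_const
      exact continuous_finset_prod _ fun i _ => continuous_id.sub continuous_const
    refine Continuous.ext_on (dense_compl_singleton w) hc1 hc2 ?_
    intro x hx
    exact heq x hx
  exact (congrFun hfun z).symm
end

section
/- Let f be analytic on an open set Ω ⊆ ℂ containing pairwise distinct points z_1,...,z_m, and let C be a simple closed contour in Ω winding once counterclockwise around z, z_1,...,z_m. Then for each N ≥ 1, f(z) = ∑_{n=0}^{N-1} q_n(z) · ∏_{k=1}^m (z - z_k)^n + r_N(z), where q_n(z) = ∑_{j=1}^m a_{n,j} · ∏_{k≠j}(z - z_k)/∏_{k≠j}(z_j - z_k), a_{n,j} = (1/2πi) ∮_C f(w) dw / [(w - z_j) ∏_{k=1}^m (w - z_k)^n], and r_N(z) = (1/2πi) ∮_C [f(w)/((w - z) ∏_{k=1}^m (w - z_k)^N)] dw · ∏_{k=1}^m (z - z_k)^N. -/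
open Finset Topology Polynomial

private lemma circleIntegral_finset_sum {ι : Type*} (s : Finset ι) (F : ι → ℂ → ℂ)
    {c : ℂ} {R : ℝ} (h : ∀ i ∈ s, CircleIntegrable (F i) c R) :
    (∮ w in C(c, R), ∑ i ∈ s, F i w) = ∑ i ∈ s, ∮ w in C(c, R), F i w := by
  simp only [circleIntegral, smul_sum]
  exact intervalIntegral.integral_finset_sum fun i hi => (h i hi).out

private lemma key_interp {m : ℕ} (zs : Fin m → ℂ) (hzs : Function.Injective zs)
    (w : ℂ) (hw : ∀ k, w ≠ zs k) (z : ℂ) :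
    (∏ k, (w - zs k)) - ∏ k, (z - zs k) =
      (w - z) * ∑ j, (∏ k ∈ univ.erase j, (w - zs k)) *
        ((∏ k ∈ univ.erase j, (z - zs k)) / ∏ k ∈ univ.erase j, (zs j - zs k)) := by
  set p : ℂ[X] := C (∏ k, (w - zs k)) - ∏ k, (X - C (zs k)) with hp
  have hroot : p.IsRoot w := by simp [hp, IsRoot, eval_prod]
  obtain ⟨q, hq⟩ := dvd_iff_isRoot.mpr hroot
  have hdeg : q.degree < (#(univ : Finset (Fin m)) : ℕ) := by
    rw [card_univ, Fintype.card_fin]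
    by_cases hq0 : q = 0
    · simp only [hq0, degree_zero]
      exact WithBot.bot_lt_coe m
    · rw [← natDegree_lt_iff_degree_lt hq0]
      have hXC : (X - C w : ℂ[X]) ≠ 0 := X_sub_C_ne_zero w
      have hple : p.natDegree ≤ m := by
        refine le_trans (natDegree_sub_le _ _) ?_
        simp only [natDegree_C, max_le_iff]
        constructor
        · exact Nat.zero_le m
        · refine le_of_eq ?_
          rw [natDegree_prod _ _ fun i _ => X_sub_C_ne_zero (zs i)]
          simp
      have := natDegree_mul hXC hq0
      rw [← hq, natDegree_X_sub_C] at this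
      omega
  have hinj : Set.InjOn zs (univ : Finset (Fin m)) := hzs.injOn
  have hqi := Lagrange.eq_interpolate hinj hdeg
  have hqj : ∀ j, q.eval (zs j) = - ∏ k ∈ univ.erase j, (w - zs k) := by
    intro j
    have hne : zs j - w ≠ 0 := sub_ne_zero.2 fun h => hw j h.symm
    apply mul_left_cancel₀ hne
    have h1 : p.eval (zs j) = (zs j - w) * q.eval (zs j) := by rw [hq]; simp
    rw [← h1]
    have h2 : p.eval (zs j) = ∏ k, (w - zs k) := by
      have : (∏ k, (zs j - zs k)) = 0 :=
        Finset.prod_eq_zero (mem_univ j) (by simp)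
      simp [hp, eval_prod, this]
    rw [h2, ← Finset.mul_prod_erase univ (fun k => w - zs k) (mem_univ j)]
    ring
  -- evaluate q at z
  have hev : q.eval z = ∑ j, (- ∏ k ∈ univ.erase j, (w - zs k)) *
      ∏ k ∈ univ.erase j, ((zs j - zs k)⁻¹ * (z - zs k)) := by
    conv_lhs => rw [hqi]
    rw [Lagrange.interpolate_apply, eval_finset_sum]
    refine Finset.sum_congr rfl fun j _ => ?_
    rw [eval_mul, eval_C, hqj j]
    congr 1
    simp [Lagrange.basis, eval_prod, Lagrange.basisDivisor]
  have hpz : p.eval z = (z - w) * q.eval z := by rw [hq]; simp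
  have h2 : p.eval z = (∏ k, (w - zs k)) - ∏ k, (z - zs k) := by
    simp [hp, eval_prod]
  have hterm : ∑ j, (- ∏ k ∈ univ.erase j, (w - zs k)) *
      ∏ k ∈ univ.erase j, ((zs j - zs k)⁻¹ * (z - zs k)) =
      - ∑ j, (∏ k ∈ univ.erase j, (w - zs k)) *
        ((∏ k ∈ univ.erase j, (z - zs k)) / ∏ k ∈ univ.erase j, (zs j - zs k)) := by
    rw [← Finset.sum_neg_distrib]
    refine Finset.sum_congr rfl fun j _ => ?_
    rw [Finset.prod_mul_distrib, Finset.prod_inv_distrib, div_eq_mul_inv]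
    ring
  rw [← h2, hpz, hev, hterm]
  ring

private lemma lemA {m : ℕ} (zs : Fin m → ℂ) (hzs : Function.Injective zs)
    (w z : ℂ) (hw : ∀ k, w ≠ zs k) (hwz : w ≠ z) :
    (w - z)⁻¹ = (∑ j, (w - zs j)⁻¹ *
        ((∏ k ∈ univ.erase j, (z - zs k)) / ∏ k ∈ univ.erase j, (zs j - zs k))) +
      ((∏ k, (z - zs k)) / ∏ k, (w - zs k)) * (w - z)⁻¹ := by
  have hPw : (∏ k, (w - zs k)) ≠ 0 :=
    Finset.prod_ne_zero_iff.2 fun k _ => sub_ne_zero.2 (hw k)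
  have hwz' : w - z ≠ 0 := sub_ne_zero.2 hwz
  have h1 : ∀ j : Fin m, (w - zs j)⁻¹ =
      (∏ k ∈ univ.erase j, (w - zs k)) * (∏ k, (w - zs k))⁻¹ := by
    intro j
    have hej : (∏ k ∈ univ.erase j, (w - zs k)) ≠ 0 :=
      Finset.prod_ne_zero_iff.2 fun k _ => sub_ne_zero.2 (hw k)
    have hwj : w - zs j ≠ 0 := sub_ne_zero.2 (hw j)
    rw [← Finset.mul_prod_erase univ (fun k => w - zs k) (mem_univ j)]
    field_simp
  have hsum : (∑ j, (w - zs j)⁻¹ *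
      ((∏ k ∈ univ.erase j, (z - zs k)) / ∏ k ∈ univ.erase j, (zs j - zs k))) =
      (∑ j, (∏ k ∈ univ.erase j, (w - zs k)) *
        ((∏ k ∈ univ.erase j, (z - zs k)) / ∏ k ∈ univ.erase j, (zs j - zs k))) *
        (∏ k, (w - zs k))⁻¹ := by
    rw [Finset.sum_mul]
    exact Finset.sum_congr rfl fun j _ => by rw [h1 j]; ring
  rw [hsum]
  have hkey := key_interp zs hzs w hw z
  set S := ∑ j, (∏ k ∈ univ.erase j, (w - zs k)) *
      ((∏ k ∈ univ.erase j, (z - zs k)) / ∏ k ∈ univ.erase j, (zs j - zs k)) with hSdef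
  have hS : S = ((∏ k, (w - zs k)) - ∏ k, (z - zs k)) * (w - z)⁻¹ := by
    rw [hkey, mul_comm (w - z) S, mul_inv_cancel_right₀ hwz']
  rw [hS, div_eq_mul_inv]
  field_simp
  ring

private lemma lemB {m : ℕ} (zs : Fin m → ℂ) (hzs : Function.Injective zs)
    (w z : ℂ) (hw : ∀ k, w ≠ zs k) (hwz : w ≠ z) (N : ℕ) :
    (w - z)⁻¹ = (∑ n ∈ Finset.range N, (∑ j, (w - zs j)⁻¹ *
        ((∏ k ∈ univ.erase j, (z - zs k)) / ∏ k ∈ univ.erase j, (zs j - zs k))) *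
        ((∏ k, (z - zs k)) / ∏ k, (w - zs k)) ^ n) +
      ((∏ k, (z - zs k)) / ∏ k, (w - zs k)) ^ N * (w - z)⁻¹ := by
  induction N with
  | zero => simp
  | succ n ih =>
    rw [Finset.sum_range_succ]
    linear_combination ih +
      ((∏ k, (z - zs k)) / ∏ k, (w - zs k)) ^ n * (lemA zs hzs w z hw hwz)

private lemma circleIntegrable_sum {ι : Type*} (s : Finset ι) (F : ι → ℂ → ℂ)
    {c : ℂ} {R : ℝ} (h : ∀ i ∈ s, CircleIntegrable (F i) c R) :
    CircleIntegrable (fun w => ∑ i ∈ s, F i w) c R := by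
  have heq : (∑ i ∈ s, fun θ : ℝ => F i (circleMap c R θ)) =
      fun θ => ∑ i ∈ s, F i (circleMap c R θ) := by
    funext θ; simp
  have h2 := IntervalIntegrable.sum s fun i hi => h i hi
  rw [heq] at h2
  exact h2

private lemma circleIntegral_add' {F G : ℂ → ℂ} {c : ℂ} {R : ℝ}
    (hF : CircleIntegrable F c R) (hG : CircleIntegrable G c R) :
    (∮ w in C(c, R), (F w + G w)) = (∮ w in C(c, R), F w) + ∮ w in C(c, R), G w := by
  simp only [circleIntegral, smul_add]
  exact intervalIntegral.integral_add hF.out hG.out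

/-- multi-point Taylor expansion with Cauchy-integral coefficients and
remainder, over a counterclockwise circle `C(c,R)` in `Ω` enclosing `z, z_1,...,z_m`. -/
theorem multi_point_taylor_expansion (Ω : Set ℂ) (hΩ : IsOpen Ω) (f : ℂ → ℂ)
    (hf : AnalyticOn ℂ f Ω) (m : ℕ) (zs : Fin m → ℂ) (hzs : Function.Injective zs)
    (c : ℂ) (R : ℝ) (hR : 0 < R) (hball : Metric.closedBall c R ⊆ Ω)
    (z : ℂ) (hz : z ∈ Metric.ball c R) (hzk : ∀ k, zs k ∈ Metric.ball c R)
    (N : ℕ) (hN : 1 ≤ N) :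
    f z =
      (∑ n ∈ Finset.range N,
        (∑ j, ((2 * (Real.pi : ℂ) * Complex.I)⁻¹ *
              ∮ w in C(c, R), f w / ((w - zs j) * (∏ k, (w - zs k)) ^ n)) *
            ((∏ k ∈ univ.erase j, (z - zs k)) / ∏ k ∈ univ.erase j, (zs j - zs k))) *
          (∏ k, (z - zs k)) ^ n) +
      (2 * (Real.pi : ℂ) * Complex.I)⁻¹ *
          (∮ w in C(c, R), f w / ((w - z) * (∏ k, (w - zs k)) ^ N)) *
        (∏ k, (z - zs k)) ^ N := by
  have hRle : (0:ℝ) ≤ R := hR.le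
  set Pz : ℂ := ∏ k, (z - zs k) with hPzdef
  set L : Fin m → ℂ := fun j =>
    (∏ k ∈ univ.erase j, (z - zs k)) / ∏ k ∈ univ.erase j, (zs j - zs k) with hLdef
  have hsph : ∀ w ∈ Metric.sphere c R, ∀ x ∈ Metric.ball c R, w ≠ x := by
    intro w hw x hx h
    rw [Metric.mem_sphere] at hw
    rw [Metric.mem_ball] at hx
    rw [h] at hw; rw [hw] at hx; exact lt_irrefl _ hx
  have hd : DifferentiableOn ℂ f (Metric.closedBall c R) :=
    (hf.mono hball).differentiableOn
  have fc : ContinuousOn f (Metric.sphere c R) :=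
    hf.continuousOn.mono ((Metric.sphere_subset_closedBall).trans hball)
  have hPcont : Continuous fun w : ℂ => ∏ k, (w - zs k) :=
    continuous_finset_prod _ fun i _ => continuous_id.sub continuous_const
  have hPne : ∀ w ∈ Metric.sphere c R, (∏ k, (w - zs k)) ≠ 0 := fun w hw =>
    Finset.prod_ne_zero_iff.2 fun k _ => sub_ne_zero.2 (hsph w hw _ (hzk k))
  -- integrability
  have hint : ∀ (n : ℕ) (j : Fin m), CircleIntegrable
      (fun w => f w / ((w - zs j) * (∏ k, (w - zs k)) ^ n) * (L j * Pz ^ n)) c R := by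
    intro n j
    refine ContinuousOn.circleIntegrable hRle (ContinuousOn.mul ?_ continuousOn_const)
    refine fc.div (((continuous_id.sub continuous_const).mul (hPcont.pow n)).continuousOn) ?_
    intro w hw
    exact mul_ne_zero (sub_ne_zero.2 (hsph w hw _ (hzk j))) (pow_ne_zero _ (hPne w hw))
  have hintR : CircleIntegrable
      (fun w => f w / ((w - z) * (∏ k, (w - zs k)) ^ N) * Pz ^ N) c R := by
    refine ContinuousOn.circleIntegrable hRle (ContinuousOn.mul ?_ continuousOn_const)
    refine fc.div (((continuous_id.sub continuous_const).mul (hPcont.pow N)).continuousOn) ?_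
    intro w hw
    exact mul_ne_zero (sub_ne_zero.2 (hsph w hw _ hz)) (pow_ne_zero _ (hPne w hw))
  -- pointwise identity on the sphere
  have hEq : Set.EqOn (fun w => (w - z)⁻¹ • f w)
      (fun w => (∑ n ∈ Finset.range N,
          ∑ j, f w / ((w - zs j) * (∏ k, (w - zs k)) ^ n) * (L j * Pz ^ n)) +
        f w / ((w - z) * (∏ k, (w - zs k)) ^ N) * Pz ^ N) (Metric.sphere c R) := by
    intro w hw
    have hwz : w ≠ z := hsph w hw z hz
    have hwk : ∀ k, w ≠ zs k := fun k => hsph w hw _ (hzk k)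
    have hB := lemB zs hzs w z hwk hwz N
    have := congrArg (fun t => t * f w) hB
    simp only [smul_eq_mul]
    rw [mul_comm ((w - z)⁻¹) (f w)] at this ⊢
    rw [this, add_mul, Finset.sum_mul]
    congr 1
    · refine Finset.sum_congr rfl fun n _ => ?_
      rw [Finset.sum_mul, Finset.sum_mul]
      refine Finset.sum_congr rfl fun j _ => ?_
      simp only [← hLdef, ← hPzdef, div_pow, div_eq_mul_inv, mul_inv]
      ring
    · simp only [← hPzdef, div_pow, div_eq_mul_inv, mul_inv]
      ring
  -- Cauchy integral formula
  have hC : (∮ w in C(c, R), (w - z)⁻¹ • f w) = (2 * (Real.pi : ℂ) * Complex.I) • f z :=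
    hd.circleIntegral_sub_inv_smul hz
  have h2pi : (2 * (Real.pi : ℂ) * Complex.I) ≠ 0 := Complex.two_pi_I_ne_zero
  -- integrate the pointwise identity
  have hI : (2 * (Real.pi : ℂ) * Complex.I) * f z =
      (∑ n ∈ Finset.range N,
        ∑ j, (∮ w in C(c, R), f w / ((w - zs j) * (∏ k, (w - zs k)) ^ n)) * (L j * Pz ^ n)) +
      (∮ w in C(c, R), f w / ((w - z) * (∏ k, (w - zs k)) ^ N)) * Pz ^ N := by
    have h1 : (∮ w in C(c, R), (w - z)⁻¹ • f w) =
        ∮ w in C(c, R), ((∑ n ∈ Finset.range N,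
          ∑ j, f w / ((w - zs j) * (∏ k, (w - zs k)) ^ n) * (L j * Pz ^ n)) +
        f w / ((w - z) * (∏ k, (w - zs k)) ^ N) * Pz ^ N) :=
      circleIntegral.integral_congr hRle hEq
    rw [← smul_eq_mul, ← hC, h1]
    rw [circleIntegral_add'
      (circleIntegrable_sum _ _ fun n _ => circleIntegrable_sum _ _ fun j _ => hint n j)
      hintR]
    congr 1
    · rw [circleIntegral_finset_sum _ _ fun n _ => circleIntegrable_sum _ _ fun j _ => hint n j]
      refine Finset.sum_congr rfl fun n _ => ?_
      rw [circleIntegral_finset_sum _ _ fun j _ => hint n j]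
      refine Finset.sum_congr rfl fun j _ => ?_
      exact circleIntegral.integral_smul_const _ _ _ _
    · exact circleIntegral.integral_smul_const _ _ _ _
  -- conclude
  have hfz : f z = (2 * (Real.pi : ℂ) * Complex.I)⁻¹ *
      ((∑ n ∈ Finset.range N,
        ∑ j, (∮ w in C(c, R), f w / ((w - zs j) * (∏ k, (w - zs k)) ^ n)) * (L j * Pz ^ n)) +
      (∮ w in C(c, R), f w / ((w - z) * (∏ k, (w - zs k)) ^ N)) * Pz ^ N) := by
    rw [← hI, inv_mul_cancel_left₀ h2pi]
  rw [hfz, mul_add, Finset.mul_sum]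
  congr 1
  · refine Finset.sum_congr rfl fun n _ => ?_
    rw [Finset.mul_sum, Finset.sum_mul]
    refine Finset.sum_congr rfl fun j _ => ?_
    ring
  · ring
end

section
/- Let Ω₀ ⊂ Ω ⊆ ℂ with Ω open and Ω₀ closed, let z₁,...,z_p ∈ Ω₀ and f analytic on Ω∖Ω₀. Define r₁ = inf_{w∈ℂ∖Ω} ∏_{k=1}^p |w − z_k|^{m_k} and r₂ = sup_{w∈Ω₀} ∏_{k=1}^p |w − z_k|^{m_k}, and suppose r₂ < r₁. Then for z ∈ Ω∖Ω₀ with r₂ < ∏_{k=1}^p |z − z_k|^{m_k} < r₁, the remainder of the N-term multi-point Laurent expansion tends to 0 as N → ∞: specifically, if Γ₁, Γ₂ are counterclockwise contours in Ω∖Ω₀ around z₁,...,z_p with ∏|z − z_k|^{m_k} < ∏|w − z_k|^{m_k} on Γ₁ and ∏|w − z_k|^{m_k} < ∏|z − z_k|^{m_k} on Γ₂, z inside Γ₁ but outside Γ₂, and |f| ≤ M on Γ₁ ∪ Γ₂, then the quantity r_N(z) = (1/2πi)∮_{Γ₁} f(w)∏(z−z_k)^{N m_k}/[(w−z)∏(w−z_k)^{N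 m_k}]dw − (1/2πi)∮_{Γ₂} f(w)∏(w−z_k)^{N m_k}/[(w−z)∏(z−z_k)^{N m_k}]dw tends to 0 as N → ∞. -/
/-!
Writing `P w = ∏ k, (w - z_k) ^ m_k`, the integrands are `f w / (w - z) * (P z / P w) ^ N` on `Γ₁`
and `f w / (w - z) * (P w / P z) ^ N` on `Γ₂`. By the product inequalities on the contours both
ratios have modulus `< 1` there, hence, by compactness of the contours, modulus at most some
`q < 1`; the integrals are then `O(q ^ N)`.
-/

open Finset Topology Filter Metric

theorem prod_pow_mul_eq_pow_prod {ι M : Type*} [CommMonoid M] (s : Finset ι) (f : ι → M)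
    (m : ι → ℕ) (N : ℕ) : ∏ k ∈ s, f k ^ (N * m k) = (∏ k ∈ s, f k ^ m k) ^ N := by
  simp only [mul_comm N, pow_mul, prod_pow]

theorem mul_pow_div_mul_pow {K : Type*} [DivisionCommMonoid K] (a b c d : K) (N : ℕ) :
    a * b ^ N / (c * d ^ N) = a / c * (b / d) ^ N := by
  rw [div_pow, mul_div_mul_comm]

theorem norm_div_sub_le_of_mem_sphere {c z w a : ℂ} {R M : ℝ} (hz : z ∉ sphere c R)
    (hw : w ∈ sphere c R) (ha : ‖a‖ ≤ M) : ‖a / (w - z)‖ ≤ M / |R - dist z c| := by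
  have hδ : 0 < |R - dist z c| := abs_pos.2 (sub_ne_zero.2 (Ne.symm hz))
  have hdist : |R - dist z c| ≤ ‖w - z‖ := by
    rw [← mem_sphere.1 hw, ← dist_eq_norm]
    exact abs_dist_sub_le w z c
  rw [norm_div]
  exact div_le_div₀ ((norm_nonneg a).trans ha) ha hδ hdist

theorem tendsto_circleIntegral_mul_pow_atTop_zero {c : ℂ} {R C : ℝ} (hR : 0 ≤ R)
    {φ ρ : ℂ → ℂ} (hφ : ∀ w ∈ sphere c R, ‖φ w‖ ≤ C) (hρc : ContinuousOn ρ (sphere c R))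
    (hρ : ∀ w ∈ sphere c R, ‖ρ w‖ < 1) :
    Tendsto (fun N : ℕ => ∮ w in C(c, R), φ w * ρ w ^ N) atTop (𝓝 0) := by
  obtain ⟨w₀, hw₀, hmax⟩ := (isCompact_sphere c R).exists_isMaxOn
    (NormedSpace.sphere_nonempty.2 hR) hρc.norm
  have hC : 0 ≤ C := (norm_nonneg _).trans (hφ w₀ hw₀)
  have hbound : ∀ N : ℕ, ∀ w ∈ sphere c R, ‖φ w * ρ w ^ N‖ ≤ C * ‖ρ w₀‖ ^ N := fun N w hw => by
    rw [norm_mul, norm_pow]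
    exact mul_le_mul (hφ w hw) (pow_le_pow_left₀ (norm_nonneg _) (hmax hw) N)
      (by positivity) hC
  refine squeeze_zero_norm
    (fun N => circleIntegral.norm_integral_le_of_norm_le_const hR (hbound N)) ?_
  simpa using ((tendsto_pow_atTop_nhds_zero_of_lt_one (norm_nonneg _) (hρ w₀ hw₀)).const_mul C
    ).const_mul (2 * Real.pi * R)

theorem multi_point_laurent_remainder_tendsto_zero_general
    (f : ℂ → ℂ) (p : ℕ) (zs : Fin p → ℂ) (ms : Fin p → ℕ) (z : ℂ)
    (c₁ c₂ : ℂ) (R₁ R₂ : ℝ) (hR₁ : 0 < R₁) (hR₂ : 0 < R₂)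
    (hzin : z ∈ Metric.ball c₁ R₁) (hzout : z ∉ Metric.closedBall c₂ R₂)
    (hw1 : ∀ w ∈ Metric.sphere c₁ R₁,
      ∏ k, ‖z - zs k‖ ^ ms k < ∏ k, ‖w - zs k‖ ^ ms k)
    (hw2 : ∀ w ∈ Metric.sphere c₂ R₂,
      ∏ k, ‖w - zs k‖ ^ ms k < ∏ k, ‖z - zs k‖ ^ ms k)
    (M : ℝ) (hM : ∀ w ∈ Metric.sphere c₁ R₁ ∪ Metric.sphere c₂ R₂,
      ‖f w‖ ≤ M) :
    Filter.Tendsto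
      (fun N : ℕ =>
        (2 * (Real.pi : ℂ) * Complex.I)⁻¹ *
          (∮ w in C(c₁, R₁), f w * (∏ k, (z - zs k) ^ (N * ms k)) /
            ((w - z) * ∏ k, (w - zs k) ^ (N * ms k))) -
        (2 * (Real.pi : ℂ) * Complex.I)⁻¹ *
          (∮ w in C(c₂, R₂), f w * (∏ k, (w - zs k) ^ (N * ms k)) /
            ((w - z) * ∏ k, (z - zs k) ^ (N * ms k))))
      Filter.atTop (𝓝 0) := by
  set P : ℂ → ℂ := fun w => ∏ k, (w - zs k) ^ ms k
  have hnorm (v : ℂ) : ‖P v‖ = ∏ k, ‖v - zs k‖ ^ ms k := by simp [P, norm_prod]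
  have hPc : Continuous P := by fun_prop
  have h₁ : Tendsto (fun N : ℕ => ∮ w in C(c₁, R₁), f w / (w - z) * (P z / P w) ^ N)
      atTop (𝓝 0) := by
    have hPw (w) (hw : w ∈ sphere c₁ R₁) : ‖P z‖ < ‖P w‖ := by simpa only [hnorm] using hw1 w hw
    refine tendsto_circleIntegral_mul_pow_atTop_zero hR₁.le
      (fun w hw => norm_div_sub_le_of_mem_sphere (fun h => (mem_sphere.1 h).not_lt hzin) hw
        (hM w (.inl hw)))
      (continuousOn_const.div hPc.continuousOn
        fun w hw => norm_pos_iff.1 ((norm_nonneg _).trans_lt (hPw w hw)))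
      fun w hw => ?_
    rw [norm_div, div_lt_one ((norm_nonneg _).trans_lt (hPw w hw))]
    exact hPw w hw
  have h₂ : Tendsto (fun N : ℕ => ∮ w in C(c₂, R₂), f w / (w - z) * (P w / P z) ^ N)
      atTop (𝓝 0) := by
    have hPw (w) (hw : w ∈ sphere c₂ R₂) : ‖P w‖ < ‖P z‖ := by simpa only [hnorm] using hw2 w hw
    refine tendsto_circleIntegral_mul_pow_atTop_zero hR₂.le
      (fun w hw => norm_div_sub_le_of_mem_sphere (fun h => hzout (sphere_subset_closedBall h)) hw
        (hM w (.inr hw)))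
      (hPc.continuousOn.div_const _) fun w hw => ?_
    rw [norm_div, div_lt_one ((norm_nonneg _).trans_lt (hPw w hw))]
    exact hPw w hw
  simp only [prod_pow_mul_eq_pow_prod, mul_pow_div_mul_pow]
  simpa using (h₁.const_mul (2 * (Real.pi : ℂ) * Complex.I)⁻¹).sub
    (h₂.const_mul (2 * (Real.pi : ℂ) * Complex.I)⁻¹)

/-- the remainder of the `N`-term multi-point Laurent expansion tends to
`0` as `N → ∞`, for `z` in the lemniscate annulus `r₂ < ∏|z - z_k|^{m_k} < r₁`, with
contours `Γ₁ = C(c₁,R₁)` and `Γ₂ = C(c₂,R₂)` in `Ω ∖ Ω₀` around `Ω₀` satisfying the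
stated product inequalities, `z` inside `Γ₁` and outside `Γ₂`, and `|f| ≤ M` on
`Γ₁ ∪ Γ₂`. -/
theorem multi_point_laurent_remainder_tendsto_zero
    (Ω Ω₀ : Set ℂ) (hΩ : IsOpen Ω) (hΩ₀ : IsClosed Ω₀) (hsub : Ω₀ ⊆ Ω)
    (f : ℂ → ℂ) (hf : AnalyticOn ℂ f (Ω \ Ω₀))
    (p : ℕ) (zs : Fin p → ℂ) (hzs : Function.Injective zs)
    (hzsΩ₀ : ∀ k, zs k ∈ Ω₀) (ms : Fin p → ℕ) (hms : ∀ k, 1 ≤ ms k)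
    (r₁ r₂ : ℝ)
    (hr₁ : r₁ = sInf ((fun w => ∏ k, ‖w - zs k‖ ^ ms k) '' Ωᶜ))
    (hr₂ : r₂ = sSup ((fun w => ∏ k, ‖w - zs k‖ ^ ms k) '' Ω₀))
    (hr : r₂ < r₁)
    (z : ℂ) (hzΩ : z ∈ Ω \ Ω₀)
    (hz1 : r₂ < ∏ k, ‖z - zs k‖ ^ ms k)
    (hz2 : ∏ k, ‖z - zs k‖ ^ ms k < r₁)
    (c₁ c₂ : ℂ) (R₁ R₂ : ℝ) (hR₁ : 0 < R₁) (hR₂ : 0 < R₂)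
    (hΓ₁ : Metric.sphere c₁ R₁ ⊆ Ω \ Ω₀) (hΓ₂ : Metric.sphere c₂ R₂ ⊆ Ω \ Ω₀)
    (hΩ₀in : Ω₀ ⊆ Metric.ball c₂ R₂)
    (hΓ₂Γ₁ : Metric.closedBall c₂ R₂ ⊆ Metric.ball c₁ R₁)
    (hzin : z ∈ Metric.ball c₁ R₁) (hzout : z ∉ Metric.closedBall c₂ R₂)
    (hw1 : ∀ w ∈ Metric.sphere c₁ R₁,
      ∏ k, ‖z - zs k‖ ^ ms k < ∏ k, ‖w - zs k‖ ^ ms k)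
    (hw2 : ∀ w ∈ Metric.sphere c₂ R₂,
      ∏ k, ‖w - zs k‖ ^ ms k < ∏ k, ‖z - zs k‖ ^ ms k)
    (M : ℝ) (hM : ∀ w ∈ Metric.sphere c₁ R₁ ∪ Metric.sphere c₂ R₂,
      ‖f w‖ ≤ M) :
    Filter.Tendsto
      (fun N : ℕ =>
        (2 * (Real.pi : ℂ) * Complex.I)⁻¹ *
          (∮ w in C(c₁, R₁), f w * (∏ k, (z - zs k) ^ (N * ms k)) /
            ((w - z) * ∏ k, (w - zs k) ^ (N * ms k))) -
        (2 * (Real.pi : ℂ) * Complex.I)⁻¹ *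
          (∮ w in C(c₂, R₂), f w * (∏ k, (w - zs k) ^ (N * ms k)) /
            ((w - z) * ∏ k, (z - zs k) ^ (N * ms k))))
      Filter.atTop (𝓝 0) :=
  multi_point_laurent_remainder_tendsto_zero_general f p zs ms z c₁ c₂ R₁ R₂ hR₁ hR₂ hzin hzout hw1
    hw2 M hM
end
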